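/- arXiv:1910.06198 — 3 statements merged into one kernel-verified Lean document; each statement's English description precedes it below -/
import Mathlib

section
/- For every real ν ∈ (0, 1/2], the sequence of gaps (j_{ν,k+1} − j_{ν,k})_{k≥1} between consecutive positive zeros of the Bessel function J_ν is nondecreasing in k, and converges to π as k → ∞. -/
/-!
For `x > 0` the function `u(x) = x ^ (ν + 1/2) ∑ₙ cₙ (x²/4)ⁿ = 2^ν √x J_ν(x)` solves
`u'' + q u = 0` with `q(x) = 1 + (1/4 - ν²)/x²`, and for `|ν| ≤ 1/2` the potential `q` is `≥ 1`,
decreasing, and tends to `1`. Sturm comparison through the Wronskian `u v' - u' v` then gives three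
facts about consecutive zeros `a < b < c`: comparing with `sin (x - a)` gives `b - a ≤ π`;
comparing with `sin (ω (x - a))`, `ω² = q(a) ≥ q` on `[a, b]`, gives `π / √q(a) ≤ b - a`; and
comparing `u` with its translate `u (· + (b - a))`, whose potential is smaller, gives
`b - a ≤ c - b`. The comparisons are strict because zeros are simple: since `q` decreases, the
energy `u'²/q + u²` is nondecreasing, so a double zero would force `u ≡ 0` to its left.
Monotone positive gaps force `j_k → ∞`, so the gaps are squeezed to `π`.
-/

open MeasureTheory Filter Set

/-- The Bessel function of the first kind of (real) order `ν`. -/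
noncomputable def besselJ (ν x : ℝ) : ℝ :=
  ∑' n : ℕ, ((-1 : ℝ) ^ n / ((n.factorial : ℝ) * Real.Gamma ((n : ℝ) + ν + 1)))
    * (x / 2) ^ (2 * n) * (x / 2) ^ ν

open Real Topology

lemma IsPreconnected.forall_pos_or_forall_neg {f : ℝ → ℝ} {s : Set ℝ} (hs : IsPreconnected s)
    (hf : ContinuousOn f s) (h0 : ∀ x ∈ s, f x ≠ 0) :
    (∀ x ∈ s, 0 < f x) ∨ ∀ x ∈ s, f x < 0 := by
  by_contra! ⟨⟨y, hy, hfy⟩, ⟨z, hz, hfz⟩⟩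
  obtain ⟨x, hx, hfx⟩ := hs.intermediate_value hy hz hf ⟨hfy, hfz⟩
  exact h0 x hx hfx

lemma HasDerivAt.nonpos_of_pos_left {f : ℝ → ℝ} {f' a b : ℝ} (hf : HasDerivAt f f' b)
    (hab : a < b) (hfb : f b = 0) (hpos : ∀ x ∈ Ioo a b, 0 < f x) : f' ≤ 0 := by
  have hslope : Tendsto (slope f b) (𝓝[<] b) (𝓝 f') :=
    (hasDerivAt_iff_tendsto_slope.1 hf).mono_left (nhdsWithin_mono b fun x hx => ne_of_lt hx)
  refine le_of_tendsto hslope ?_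
  filter_upwards [Ioo_mem_nhdsLT hab] with x hx
  rw [slope_def_field, hfb, sub_zero]
  exact div_nonpos_of_nonneg_of_nonpos (hpos x hx).le (by linarith [hx.2])

lemma nonneg_on_Icc_of_pos_on_Ioo {f : ℝ → ℝ} {a b : ℝ} (ha : 0 ≤ f a) (hb : 0 ≤ f b)
    (h : ∀ x ∈ Ioo a b, 0 < f x) : ∀ x ∈ Icc a b, 0 ≤ f x := by
  rintro x ⟨hax, hxb⟩
  rcases hax.eq_or_lt with rfl | hax
  · exact ha
  rcases hxb.eq_or_lt with rfl | hxb
  · exact hb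
  exact (h x ⟨hax, hxb⟩).le

lemma tendsto_atTop_of_lt_of_monotone_sub {z : ℕ → ℝ} (h01 : z 0 < z 1)
    (hz : Monotone fun n => z (n + 1) - z n) : Tendsto z atTop atTop := by
  have hlin : ∀ n : ℕ, z 0 + n * (z 1 - z 0) ≤ z n := by
    intro n
    induction n with
    | zero => simp
    | succ n ih =>
      have : z 1 - z 0 ≤ z (n + 1) - z n := hz n.zero_le
      push_cast
      linarith
  exact tendsto_atTop_mono hlin (tendsto_atTop_add_const_left _ _
    (tendsto_natCast_atTop_atTop.atTop_mul_const (sub_pos.2 h01)))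

def IsSturmSolution (q u u' : ℝ → ℝ) (s : Set ℝ) : Prop :=
  ∀ x ∈ s, HasDerivAt u (u' x) x ∧ HasDerivAt u' (-(q x * u x)) x

lemma isSturmSolution_sin (ω a : ℝ) (s : Set ℝ) :
    IsSturmSolution (fun _ => ω ^ 2) (fun x => sin (ω * (x - a)))
      (fun x => ω * cos (ω * (x - a))) s := by
  intro x _
  have hlin : HasDerivAt (fun x => ω * (x - a)) ω x := by
    simpa using ((hasDerivAt_id x).sub_const a).const_mul ω
  constructor
  · exact ((hasDerivAt_sin _).comp x hlin).congr_deriv (mul_comm _ _)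
  · exact (((hasDerivAt_cos _).comp x hlin).const_mul ω).congr_deriv (by ring)

namespace IsSturmSolution

variable {q q' r u u' v v' w w' : ℝ → ℝ} {s t : Set ℝ} {a b c ω : ℝ}

lemma mono (h : IsSturmSolution q u u' s) (hts : t ⊆ s) : IsSturmSolution q u u' t :=
  fun x hx => h x (hts hx)

lemma continuousOn (h : IsSturmSolution q u u' s) : ContinuousOn u s :=
  fun x hx => (h x hx).1.continuousAt.continuousWithinAt

lemma const_mul (h : IsSturmSolution q u u' s) (σ : ℝ) :
    IsSturmSolution q (fun x => σ * u x) (fun x => σ * u' x) s := fun x hx =>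
  ⟨(h x hx).1.const_mul σ, by simpa only [mul_neg, mul_left_comm] using (h x hx).2.const_mul σ⟩

lemma comp_add_const (h : IsSturmSolution q u u' s) (δ : ℝ) :
    IsSturmSolution (fun x => q (x + δ)) (fun x => u (x + δ)) (fun x => u' (x + δ))
      ((· + δ) ⁻¹' s) := fun x hx =>
  ⟨(h _ hx).1.comp_add_const x δ, (h _ hx).2.comp_add_const x δ⟩

lemma monotoneOn_wronskian (hu : IsSturmSolution q u u' (Icc a c))
    (hv : IsSturmSolution r v v' (Icc a c)) (hrq : ∀ x ∈ Icc a c, r x ≤ q x)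
    (hu0 : ∀ x ∈ Icc a c, 0 ≤ u x) (hv0 : ∀ x ∈ Icc a c, 0 ≤ v x) :
    MonotoneOn (fun x => u x * v' x - u' x * v x) (Icc a c) := by
  have hW : ∀ x ∈ Icc a c,
      HasDerivAt (fun x => u x * v' x - u' x * v x) ((q x - r x) * (u x * v x)) x := by
    intro x hx
    exact (((hu x hx).1.mul (hv x hx).2).sub ((hu x hx).2.mul (hv x hx).1)).congr_deriv
      (by ring)
  refine monotoneOn_of_hasDerivWithinAt_nonneg (convex_Icc a c)
    (fun x hx => (hW x hx).continuousAt.continuousWithinAt)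
    (fun x hx => (hW x (interior_subset hx)).hasDerivWithinAt) fun x hx => ?_
  have hx := interior_subset hx
  exact mul_nonneg (sub_nonneg.2 (hrq x hx)) (mul_nonneg (hu0 x hx) (hv0 x hx))

lemma eq_zero_of_eq_zero_of_deriv_eq_zero (hu : IsSturmSolution q u u' (Icc a b))
    (hq : ∀ x ∈ Icc a b, HasDerivAt q (q' x) x) (hq' : ∀ x ∈ Icc a b, q' x ≤ 0)
    (hq0 : ∀ x ∈ Icc a b, 0 < q x) (hub : u b = 0) (hu'b : u' b = 0) :
    ∀ x ∈ Icc a b, u x = 0 := by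
  have hE : ∀ x ∈ Icc a b, HasDerivAt (fun x => u' x ^ 2 / q x + u x ^ 2)
      (-(u' x ^ 2 * q' x) / q x ^ 2) x := by
    intro x hx
    refine ((((hu x hx).2.pow 2).div (hq x hx) (hq0 x hx).ne').add
      ((hu x hx).1.pow 2)).congr_deriv ?_
    have := (hq0 x hx).ne'
    simp only [Pi.pow_apply]
    field_simp
    ring
  have hmono : MonotoneOn (fun x => u' x ^ 2 / q x + u x ^ 2) (Icc a b) :=
    monotoneOn_of_hasDerivWithinAt_nonneg (convex_Icc a b)
      (fun x hx => (hE x hx).continuousAt.continuousWithinAt)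
      (fun x hx => (hE x (interior_subset hx)).hasDerivWithinAt) fun x hx =>
        div_nonneg (neg_nonneg.2 (mul_nonpos_of_nonneg_of_nonpos (sq_nonneg _)
          (hq' x (interior_subset hx)))) (sq_nonneg _)
  intro x hx
  have hEx := hmono hx (right_mem_Icc.2 (hx.1.trans hx.2)) hx.2
  simp only [hub, hu'b, ne_eq, OfNat.ofNat_ne_zero, not_false_eq_true, zero_pow, zero_div,
    add_zero] at hEx
  have := div_nonneg (sq_nonneg (u' x)) (hq0 x hx).le
  nlinarith [sq_nonneg (u x)]

lemma deriv_neg_of_pos_left (hab : a < b) (hu : IsSturmSolution q u u' (Icc a b))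
    (hq : ∀ x ∈ Icc a b, HasDerivAt q (q' x) x) (hq' : ∀ x ∈ Icc a b, q' x ≤ 0)
    (hq0 : ∀ x ∈ Icc a b, 0 < q x) (hub : u b = 0) (hu_pos : ∀ x ∈ Ioo a b, 0 < u x) :
    u' b < 0 := by
  refine ((hu b (right_mem_Icc.2 hab.le)).1.nonpos_of_pos_left hab hub hu_pos).lt_of_ne
    fun hu'b => ?_
  have hmid : (a + b) / 2 ∈ Ioo a b := ⟨by linarith, by linarith⟩
  exact (hu_pos _ hmid).ne'
    (hu.eq_zero_of_eq_zero_of_deriv_eq_zero hq hq' hq0 hub hu'b _ (Ioo_subset_Icc_self hmid))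

lemma exists_pos_between_zeros (hab : a < b) (hu : IsSturmSolution q u u' (Icc a b))
    (hq : ∀ x ∈ Icc a b, HasDerivAt q (q' x) x) (hq' : ∀ x ∈ Icc a b, q' x ≤ 0)
    (hq0 : ∀ x ∈ Icc a b, 0 < q x) (hub : u b = 0) (hnz : ∀ x ∈ Ioo a b, u x ≠ 0) :
    ∃ σ : ℝ, σ ≠ 0 ∧ (∀ x ∈ Ioo a b, 0 < σ * u x) ∧ σ * u' b < 0 := by
  obtain ⟨σ, hσ, hpos⟩ : ∃ σ : ℝ, σ ≠ 0 ∧ ∀ x ∈ Ioo a b, 0 < σ * u x := by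
    rcases isPreconnected_Ioo.forall_pos_or_forall_neg
      (hu.mono Ioo_subset_Icc_self).continuousOn hnz with h | h
    · exact ⟨1, one_ne_zero, fun x hx => by simpa using h x hx⟩
    · exact ⟨-1, by norm_num, fun x hx => by simpa using h x hx⟩
  have hderiv := (hu.const_mul σ).deriv_neg_of_pos_left hab hq hq' hq0 (by simp [hub]) hpos
  exact ⟨σ, hσ, hpos, hderiv⟩

theorem sturm_comparison (hac : a < c) (hu : IsSturmSolution q u u' (Icc a c))
    (hv : IsSturmSolution r v v' (Icc a c)) (hrq : ∀ x ∈ Icc a c, r x ≤ q x)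
    (hua : u a = 0) (hva : v a = 0) (hvc : v c = 0) (hv_pos : ∀ x ∈ Ioo a c, 0 < v x)
    (hv'c : v' c < 0) : ∃ x ∈ Ioc a c, u x ≤ 0 := by
  by_contra! hu_pos
  have huc := hu_pos c ⟨hac, le_rfl⟩
  have hW := hu.monotoneOn_wronskian hv hrq
    (nonneg_on_Icc_of_pos_on_Ioo hua.ge huc.le fun x hx => hu_pos x (Ioo_subset_Ioc_self hx))
    (nonneg_on_Icc_of_pos_on_Ioo hva.ge hvc.ge hv_pos)
    (left_mem_Icc.2 hac.le) (right_mem_Icc.2 hac.le) hac.le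
  simp only [hua, hva, hvc, zero_mul, mul_zero, sub_zero] at hW
  nlinarith

theorem sub_le_pi_div (hω : 0 < ω) (hu : IsSturmSolution q u u' (Icc a b))
    (hq : ∀ x ∈ Icc a b, ω ^ 2 ≤ q x) (hua : u a = 0) (hu_pos : ∀ x ∈ Ioo a b, 0 < u x) :
    b - a ≤ π / ω := by
  by_contra! h
  set c := a + π / ω
  have hac : a < c := lt_add_of_pos_right a (by positivity)
  have hcb : c < b := by linarith
  have hωc : ω * (c - a) = π := by
    rw [add_sub_cancel_left]
    field_simp
  have hsub : Icc a c ⊆ Icc a b := Icc_subset_Icc_right hcb.le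
  obtain ⟨x, hx, hux⟩ := sturm_comparison hac (hu.mono hsub) (isSturmSolution_sin ω a _)
    (fun x hx => hq x (hsub hx)) hua (by simp) (by simp [hωc])
    (fun x hx => sin_pos_of_pos_of_lt_pi (mul_pos hω (sub_pos.2 hx.1))
      (hωc ▸ mul_lt_mul_of_pos_left (sub_lt_sub_right hx.2 a) hω))
    (by simp [hωc, hω])
  exact (hu_pos x ⟨hx.1, hx.2.trans_lt hcb⟩).not_ge hux

theorem pi_div_le_sub (hω : 0 < ω) (hab : a < b)
    (hu : IsSturmSolution q u u' (Icc a b)) (hq : ∀ x ∈ Icc a b, q x ≤ ω ^ 2) (hua : u a = 0)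
    (hub : u b = 0) (hu_pos : ∀ x ∈ Ioo a b, 0 < u x) (hu'b : u' b < 0) :
    π / ω ≤ b - a := by
  obtain ⟨x, hx, hsin⟩ :=
    sturm_comparison hab (isSturmSolution_sin ω a _) hu hq (by simp) hua hub hu_pos hu'b
  by_contra! h
  have hωb : ω * (b - a) < π := (lt_div_iff₀' hω).1 h
  have hωx : ω * (x - a) ≤ ω * (b - a) := mul_le_mul_of_nonneg_left (by linarith [hx.2]) hω.le
  exact hsin.not_gt (sin_pos_of_pos_of_lt_pi (mul_pos hω (sub_pos.2 hx.1)) (hωx.trans_lt hωb))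

theorem sub_le_sub (hbc : b < c) (hu : IsSturmSolution q u u' (Icc a b))
    (hw : IsSturmSolution q w w' (Icc b c)) (hq : AntitoneOn q (Icc a c)) (hua : u a = 0)
    (hu_pos : ∀ x ∈ Ioo a b, 0 < u x) (hwb : w b = 0) (hwc : w c = 0)
    (hw_pos : ∀ x ∈ Ioo b c, 0 < w x) (hw'c : w' c < 0) : b - a ≤ c - b := by
  by_contra! h
  set δ := b - a
  have hshift : IsSturmSolution (fun x => q (x + δ)) (fun x => w (x + δ)) (fun x => w' (x + δ))
      (Icc a (c - δ)) := by
    simpa [preimage_add_const_Icc, δ] using hw.comp_add_const δ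
  obtain ⟨x, hx, hux⟩ :=
    sturm_comparison (by linarith) (hu.mono (Icc_subset_Icc_right (by linarith))) hshift
      (fun x hx => hq ⟨hx.1, by linarith [hx.2]⟩ ⟨by linarith [hx.1], by linarith [hx.2]⟩
        (by linarith)) hua (by simpa [δ] using hwb) (by simpa using hwc)
    (fun x hx => hw_pos _ ⟨by linarith [hx.1], by linarith [hx.2]⟩) (by simpa using hw'c)
  exact (hu_pos x ⟨hx.1, by linarith [hx.2]⟩).not_ge hux

end IsSturmSolution

section PowerSeries

noncomputable def powerSum (c : ℕ → ℝ) (t : ℝ) : ℝ := ∑' n, c n * t ^ n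

def derivCoeff (c : ℕ → ℝ) (n : ℕ) : ℝ := (n + 1) * c (n + 1)

variable {c : ℕ → ℝ}

lemma summable_norm_mul_pow_of_norm_succ_le {K : ℝ} (hK : 0 ≤ K)
    (hc : ∀ n, ‖c (n + 1)‖ ≤ K * ‖c n‖ / (n + 1)) (r : ℝ) :
    Summable fun n => ‖c n * r ^ n‖ := by
  have hbound : ∀ n, ‖c n‖ ≤ ‖c 0‖ * K ^ n / n.factorial := by
    intro n
    induction n with
    | zero => simp
    | succ n ih =>
      calc ‖c (n + 1)‖ ≤ K * ‖c n‖ / (n + 1) := hc n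
        _ ≤ K * (‖c 0‖ * K ^ n / n.factorial) / (n + 1) := by
          gcongr
        _ = ‖c 0‖ * K ^ (n + 1) / (n + 1).factorial := by
          rw [Nat.factorial_succ]
          push_cast
          field_simp
          ring
  refine .of_nonneg_of_le (fun n => norm_nonneg _) (fun n => ?_)
    ((Real.summable_pow_div_factorial (K * |r|)).mul_left ‖c 0‖)
  rw [norm_mul, norm_pow, Real.norm_eq_abs, mul_pow]
  calc ‖c n‖ * |r| ^ n ≤ ‖c 0‖ * K ^ n / n.factorial * |r| ^ n := by gcongr; exact hbound n
    _ = ‖c 0‖ * (K ^ n * |r| ^ n / n.factorial) := by ring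

lemma summable_norm_derivCoeff_mul_pow (hc : ∀ r : ℝ, Summable fun n => ‖c n * r ^ n‖)
    (r : ℝ) : Summable fun n => ‖derivCoeff c n * r ^ n‖ := by
  refine .of_nonneg_of_le (fun n => norm_nonneg _) (fun n => ?_)
    ((summable_nat_add_iff 1).2 (hc (2 * (|r| + 1))))
  have h2 : ((n : ℝ) + 1) ≤ 2 ^ (n + 1) := by exact_mod_cast Nat.lt_two_pow_self.le
  have hr : |r| ^ n ≤ (|r| + 1) ^ (n + 1) :=
    (pow_le_pow_left₀ (abs_nonneg r) (by linarith) n).trans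
      (pow_le_pow_right₀ (by linarith [abs_nonneg r]) n.le_succ)
  simp only [derivCoeff, norm_mul, norm_pow, Real.norm_eq_abs, abs_two,
    abs_of_nonneg (by positivity : (0:ℝ) ≤ n + 1), abs_of_nonneg (by positivity : (0:ℝ) ≤ |r| + 1),
    mul_pow]
  calc (n + 1) * |c (n + 1)| * |r| ^ n = |c (n + 1)| * ((n + 1) * |r| ^ n) := by ring
    _ ≤ |c (n + 1)| * (2 ^ (n + 1) * (|r| + 1) ^ (n + 1)) := by gcongr
    _ = _ := by ring

lemma hasDerivAt_powerSum (hc : ∀ r : ℝ, Summable fun n => ‖c n * r ^ n‖) (t : ℝ) :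
    HasDerivAt (powerSum c) (powerSum (derivCoeff c) t) t := by
  set R := |t| + 1 with hR
  have hmem : ∀ y ∈ Ioo (-R) R, ‖y‖ ≤ ‖R‖ := fun y hy => (abs_lt.2 hy).le.trans (le_abs_self R)
  have h0 : (0 : ℝ) ∈ Ioo (-R) R := ⟨by linarith [abs_nonneg t], by linarith [abs_nonneg t]⟩
  have ht : t ∈ Ioo (-R) R := abs_lt.1 (lt_add_one |t|)
  have htail : HasDerivAt (fun x => ∑' n, c (n + 1) * x ^ (n + 1))
      (powerSum (derivCoeff c) t) t := by
    refine hasDerivAt_tsum_of_isPreconnected (summable_norm_derivCoeff_mul_pow hc R) isOpen_Ioo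
      isPreconnected_Ioo (g' := fun n y => derivCoeff c n * y ^ n) (fun n y _ => ?_)
      (fun n y hy => ?_) h0 (by simp) ht
    · refine ((hasDerivAt_pow (n + 1) y).const_mul (c (n + 1))).congr_deriv ?_
      simp only [derivCoeff]
      push_cast
      ring
    · simp only [norm_mul, norm_pow]
      gcongr
      exact hmem y hy
  have hsplit : powerSum c = fun x => c 0 + ∑' n, c (n + 1) * x ^ (n + 1) := by
    funext x
    rw [powerSum, (hc x).of_norm.tsum_eq_zero_add]
    simp
  rw [hsplit]
  exact htail.const_add _

lemma hasSum_natCast_mul_mul_pow (hc : ∀ r : ℝ, Summable fun n => ‖c n * r ^ n‖) (t : ℝ) :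
    HasSum (fun n => n * c n * t ^ n) (t * powerSum (derivCoeff c) t) := by
  have h : HasSum (fun n => ((n + 1 : ℕ) : ℝ) * c (n + 1) * t ^ (n + 1))
      (t * powerSum (derivCoeff c) t) := by
    refine (((summable_norm_derivCoeff_mul_pow hc t).of_norm.hasSum).mul_left t).congr_fun
      fun n => ?_
    simp only [derivCoeff]
    push_cast
    ring
  simpa using (hasSum_nat_add_iff (f := fun n : ℕ => (n : ℝ) * c n * t ^ n) 1).1 h

lemma powerSum_ode {ν : ℝ} (hc : ∀ r : ℝ, Summable fun n => ‖c n * r ^ n‖)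
    (hrec : ∀ n : ℕ, c n + (n + 1) * (n + ν + 1) * c (n + 1) = 0) (t : ℝ) :
    t * powerSum (derivCoeff (derivCoeff c)) t + (ν + 1) * powerSum (derivCoeff c) t +
      powerSum c t = 0 := by
  have hc' := summable_norm_derivCoeff_mul_pow hc
  have h := ((hasSum_natCast_mul_mul_pow hc' t).add ((hc' t).of_norm.hasSum.mul_left (ν + 1))).add
    (hc t).of_norm.hasSum
  refine h.unique (hasSum_zero.congr_fun fun n => ?_)
  simp only [derivCoeff]
  linear_combination t ^ n * hrec n

end PowerSeries

section Bessel

variable {ν : ℝ}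

noncomputable def besselCoeff (ν : ℝ) (n : ℕ) : ℝ :=
  (-1) ^ n / (n.factorial * Gamma (n + ν + 1))

lemma besselCoeff_add_mul_succ (hν : -1 < ν) (n : ℕ) :
    besselCoeff ν n + (n + 1) * (n + ν + 1) * besselCoeff ν (n + 1) = 0 := by
  have hpos : 0 < (n : ℝ) + ν + 1 := by linarith [n.cast_nonneg (α := ℝ)]
  have hΓ : Gamma ((n + 1 : ℕ) + ν + 1) = (n + ν + 1) * Gamma (n + ν + 1) := by
    rw [show ((n + 1 : ℕ) : ℝ) + ν + 1 = (n + ν + 1) + 1 by push_cast; ring,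
      Real.Gamma_add_one hpos.ne']
  have := (Real.Gamma_pos_of_pos hpos).ne'
  have := n.factorial_pos
  unfold besselCoeff
  rw [hΓ, Nat.factorial_succ]
  push_cast
  field_simp
  ring

lemma norm_besselCoeff_succ_le (hν : -1 < ν) (n : ℕ) :
    ‖besselCoeff ν (n + 1)‖ ≤ (ν + 1)⁻¹ * ‖besselCoeff ν n‖ / (n + 1) := by
  have hrec := besselCoeff_add_mul_succ hν n
  have hn : (0 : ℝ) ≤ n := n.cast_nonneg
  have hν1 : 0 < ν + 1 := by linarith
  have habs : ‖besselCoeff ν n‖ = (n + 1) * (n + ν + 1) * ‖besselCoeff ν (n + 1)‖ := by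
    rw [eq_neg_of_add_eq_zero_left hrec, norm_neg, norm_mul, Real.norm_eq_abs,
      abs_of_pos (by nlinarith)]
  rw [habs, le_div_iff₀ (by positivity), inv_mul_eq_div, le_div_iff₀ hν1]
  have := mul_nonneg
    (mul_nonneg (norm_nonneg (besselCoeff ν (n + 1))) (Nat.cast_add_one_pos n).le) hn
  nlinarith

lemma summable_norm_besselCoeff_mul_pow (hν : -1 < ν) (r : ℝ) :
    Summable fun n => ‖besselCoeff ν n * r ^ n‖ :=
  summable_norm_mul_pow_of_norm_succ_le (inv_nonneg.2 (by linarith)) (norm_besselCoeff_succ_le hν) r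

noncomputable def besselPotential (ν x : ℝ) : ℝ := 1 + (1 / 4 - ν ^ 2) / x ^ 2

lemma isSturmSolution_rpow_mul_comp_sq_div_four {G G' G'' : ℝ → ℝ}
    (hG : ∀ t > 0, HasDerivAt G (G' t) t) (hG' : ∀ t > 0, HasDerivAt G' (G'' t) t)
    (hode : ∀ t > 0, t * G'' t + (ν + 1) * G' t + G t = 0) :
    IsSturmSolution (besselPotential ν) (fun x => x ^ (ν + 1 / 2) * G (x ^ 2 / 4))
      (fun x => x ^ (ν + 1 / 2) * ((ν + 1 / 2) / x * G (x ^ 2 / 4) + x / 2 * G' (x ^ 2 / 4)))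
      (Ioi 0) := by
  intro x (hx : 0 < x)
  have hs : HasDerivAt (fun x => x ^ 2 / 4) (x / 2) x := by
    refine ((hasDerivAt_pow 2 x).div_const 4).congr_deriv ?_
    push_cast
    ring
  have hs0 : 0 < x ^ 2 / 4 := by positivity
  have hp : HasDerivAt (fun x => x ^ (ν + 1 / 2)) ((ν + 1 / 2) * (x ^ (ν + 1 / 2) / x)) x := by
    simpa only [Real.rpow_sub_one hx.ne'] using
      Real.hasDerivAt_rpow_const (p := ν + 1 / 2) (Or.inl hx.ne')
  have hGs := (hG _ hs0).comp x hs
  have hG's := (hG' _ hs0).comp x hs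
  have hinv : HasDerivAt (fun x => (ν + 1 / 2) / x) (-((ν + 1 / 2) / x ^ 2)) x := by
    refine ((hasDerivAt_const x (ν + 1 / 2)).div (hasDerivAt_id x) hx.ne').congr_deriv ?_
    simp only [id, zero_mul, mul_one, zero_sub, neg_div]
  constructor
  · refine (hp.mul hGs).congr_deriv ?_
    simp only [Function.comp_apply]
    field_simp
  · refine (hp.mul ((hinv.mul hGs).add (((hasDerivAt_id x).div_const 2).mul hG's))).congr_deriv ?_
    simp only [besselPotential, Function.comp_apply, Pi.mul_apply, Pi.add_apply, id]
    linear_combination (norm := (field_simp; ring)) x ^ (ν + 1 / 2) * hode _ hs0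

noncomputable def besselU (ν x : ℝ) : ℝ := x ^ (ν + 1 / 2) * powerSum (besselCoeff ν) (x ^ 2 / 4)

lemma besselJ_eq_powerSum (ν x : ℝ) :
    besselJ ν x = powerSum (besselCoeff ν) (x ^ 2 / 4) * (x / 2) ^ ν := by
  rw [besselJ, powerSum, ← tsum_mul_right]
  refine tsum_congr fun n => ?_
  rw [pow_mul, besselCoeff]
  ring

lemma besselU_eq_zero_iff {x : ℝ} (hx : 0 < x) : besselU ν x = 0 ↔ besselJ ν x = 0 := by
  rw [besselU, besselJ_eq_powerSum, mul_eq_zero, mul_eq_zero,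
    or_iff_right (rpow_pos_of_pos hx _).ne', or_iff_left (rpow_pos_of_pos (by positivity) _).ne']

lemma exists_isSturmSolution_besselU (hν : -1 < ν) :
    ∃ u', IsSturmSolution (besselPotential ν) (besselU ν) u' (Ioi 0) :=
  have hc := summable_norm_besselCoeff_mul_pow hν
  ⟨_, isSturmSolution_rpow_mul_comp_sq_div_four (fun t _ => hasDerivAt_powerSum hc t)
    (fun t _ => hasDerivAt_powerSum (summable_norm_derivCoeff_mul_pow hc) t)
    (fun t _ => powerSum_ode hc (besselCoeff_add_mul_succ hν) t)⟩

lemma one_le_besselPotential (hν : |ν| ≤ 1 / 2) (x : ℝ) : 1 ≤ besselPotential ν x := by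
  have : 0 ≤ 1 / 4 - ν ^ 2 := by nlinarith [sq_abs ν, abs_nonneg ν]
  unfold besselPotential
  linarith [div_nonneg this (sq_nonneg x)]

lemma antitoneOn_besselPotential (hν : |ν| ≤ 1 / 2) : AntitoneOn (besselPotential ν) (Ioi 0) := by
  intro x (hx : 0 < x) y _ hxy
  have : 0 ≤ 1 / 4 - ν ^ 2 := by nlinarith [sq_abs ν, abs_nonneg ν]
  unfold besselPotential
  gcongr

lemma hasDerivAt_besselPotential {x : ℝ} (hx : x ≠ 0) :
    HasDerivAt (besselPotential ν) (-(2 * (1 / 4 - ν ^ 2)) / x ^ 3) x := by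
  refine (((hasDerivAt_pow 2 x).inv (pow_ne_zero 2 hx)).const_mul (1 / 4 - ν ^ 2)
    |>.const_add 1).congr_deriv ?_
  field_simp
  ring

lemma tendsto_besselPotential_atTop : Tendsto (besselPotential ν) atTop (𝓝 1) := by
  show Tendsto (fun x => 1 + (1 / 4 - ν ^ 2) / x ^ 2) atTop (𝓝 1)
  simpa using (tendsto_const_nhds.div_atTop (tendsto_pow_atTop (α := ℝ) two_ne_zero)).const_add 1

lemma exists_isSturmSolution_pos_between_besselU_zeros (hν : |ν| ≤ 1 / 2) {a b : ℝ} (ha : 0 < a)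
    (hab : a < b) (hua : besselU ν a = 0) (hub : besselU ν b = 0)
    (hnz : ∀ x ∈ Ioo a b, besselU ν x ≠ 0) :
    ∃ u u' : ℝ → ℝ, IsSturmSolution (besselPotential ν) u u' (Ioi 0) ∧ u a = 0 ∧ u b = 0 ∧
      (∀ x ∈ Ioo a b, 0 < u x) ∧ u' b < 0 := by
  have hC : 0 ≤ 1 / 4 - ν ^ 2 := by nlinarith [sq_abs ν, abs_nonneg ν]
  obtain ⟨u', hu⟩ := exists_isSturmSolution_besselU (ν := ν) (by linarith [neg_abs_le ν])
  have hI : Icc a b ⊆ Ioi 0 := fun x hx => ha.trans_le hx.1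
  obtain ⟨σ, hσ, hpos, hneg⟩ := (hu.mono hI).exists_pos_between_zeros hab
    (fun x hx => hasDerivAt_besselPotential (hI hx).ne')
    (fun x hx => div_nonpos_of_nonpos_of_nonneg (by linarith) (pow_nonneg (hI hx).le 3))
    (fun x _ => one_pos.trans_le (one_le_besselPotential hν x)) hub hnz
  exact ⟨_, _, hu.const_mul σ, by simp [hua], by simp [hub], hpos, hneg⟩

theorem besselU_zero_gaps_monotone_tendsto_pi (hν : |ν| ≤ 1 / 2) {z : ℕ → ℝ} (hz0 : 0 < z 0)
    (hz : StrictMono z) (hzero : ∀ n, besselU ν (z n) = 0)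
    (hnz : ∀ n, ∀ x ∈ Ioo (z n) (z (n + 1)), besselU ν x ≠ 0) :
    Monotone (fun n => z (n + 1) - z n) ∧ Tendsto (fun n => z (n + 1) - z n) atTop (𝓝 π) := by
  have hzpos : ∀ n, 0 < z n := fun n => hz0.trans_le (hz.monotone n.zero_le)
  have hI : ∀ {a b : ℝ}, 0 < a → Icc a b ⊆ Ioi 0 := fun ha x hx => ha.trans_le hx.1
  choose u u' hu hua hub hpos hderiv using fun n =>
    exists_isSturmSolution_pos_between_besselU_zeros hν (hzpos n) (hz n.lt_succ_self) (hzero n)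
      (hzero (n + 1)) (hnz n)
  have hmono : Monotone fun n => z (n + 1) - z n := monotone_nat_of_le_succ fun n =>
    ((hu n).mono (hI (hzpos n))).sub_le_sub (hz (n + 1).lt_succ_self)
      ((hu (n + 1)).mono (hI (hzpos _))) ((antitoneOn_besselPotential hν).mono (hI (hzpos n)))
      (hua n) (hpos n) (hua (n + 1)) (hub (n + 1)) (hpos (n + 1)) (hderiv (n + 1))
  have hupper : ∀ n, z (n + 1) - z n ≤ π := fun n => by
    simpa using ((hu n).mono (hI (hzpos n))).sub_le_pi_div one_pos
      (fun x _ => by simpa using one_le_besselPotential hν x) (hua n) (hpos n)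
  have hlower : ∀ n, π / √(besselPotential ν (z n)) ≤ z (n + 1) - z n := fun n => by
    have hq := one_le_besselPotential hν (z n)
    refine ((hu n).mono (hI (hzpos n))).pi_div_le_sub (sqrt_pos.2 (by linarith))
      (hz n.lt_succ_self) (fun x hx => ?_) (hua n) (hub n) (hpos n) (hderiv n)
    rw [sq_sqrt (by linarith)]
    exact antitoneOn_besselPotential hν (hzpos n) ((hzpos n).trans_le hx.1) hx.1
  refine ⟨hmono, tendsto_of_tendsto_of_tendsto_of_le_of_le ?_ tendsto_const_nhds hlower hupper⟩
  have hq := (tendsto_besselPotential_atTop (ν := ν)).comp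
    (tendsto_atTop_of_lt_of_monotone_sub (hz zero_lt_one) hmono)
  have hlim := (tendsto_const_nhds (x := π)).div hq.sqrt (by simp)
  rwa [sqrt_one, div_one] at hlim

end Bessel

theorem bessel_zero_gaps_nondecreasing_tendsto_pi
    (ν : ℝ) (hν : 0 < ν ∧ ν ≤ 1/2) (j : ℕ → ℝ)
    (hpos : ∀ k, 1 ≤ k → 0 < j k)
    (hzero : ∀ k, 1 ≤ k → besselJ ν (j k) = 0)
    (hmono : ∀ k, 1 ≤ k → j k < j (k + 1))
    (hall : ∀ x, 0 < x → besselJ ν x = 0 → ∃ k, 1 ≤ k ∧ j k = x) :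
    (∀ k, 1 ≤ k → j (k + 1) - j k ≤ j (k + 2) - j (k + 1)) ∧
    Filter.Tendsto (fun k => j (k + 1) - j k) Filter.atTop (nhds Real.pi) := by
  set z : ℕ → ℝ := fun n => j (n + 1)
  have hzpos : ∀ n, 0 < z n := fun n => hpos (n + 1) n.succ_pos
  have hz : StrictMono z := strictMono_nat_of_lt_succ fun n => hmono (n + 1) n.succ_pos
  have hzero' : ∀ n, besselU ν (z n) = 0 := fun n =>
    (besselU_eq_zero_iff (hzpos n)).2 (hzero (n + 1) n.succ_pos)
  have hnz : ∀ n, ∀ x ∈ Ioo (z n) (z (n + 1)), besselU ν x ≠ 0 := by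
    rintro n x ⟨hnx, hxn⟩ hx
    have hx0 := (hzpos n).trans hnx
    obtain ⟨_ | m, hm, rfl⟩ := hall x hx0 ((besselU_eq_zero_iff hx0).1 hx)
    · omega
    · have := hz.lt_iff_lt.1 (show z n < z m from hnx)
      have := hz.lt_iff_lt.1 (show z m < z (n + 1) from hxn)
      omega
  obtain ⟨hgaps, hlim⟩ :=
    besselU_zero_gaps_monotone_tendsto_pi (abs_le.2 ⟨by linarith, hν.2⟩) (hzpos 0) hz hzero' hnz
  refine ⟨fun k hk => ?_, (tendsto_add_atTop_iff_nat 1).1 hlim⟩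
  obtain ⟨m, rfl⟩ := Nat.exists_eq_add_of_le' hk
  exact hgaps m.le_succ
end

section
/- Let α ∈ [0,2), let λ₁ ≠ λ_k be real numbers, and let φ₁, φ_k ∈ C²((0,1)) ∩ C⁰((0,1]) satisfy −(x^α φ_j')' = λ_j φ_j on (0,1) for j ∈ {1,k}, with φ₁(1) = φ_k(1) = 0, ∫₀¹ φ₁φ_k dx = 0, and suppose all boundary terms arising from integration by parts at x = 0 vanish (specifically lim_{x→0} x^{2−α}·x^α φ_j'(x)·φ_i(x) = 0 and lim_{x→0} x^{1+α} φ₁'(x) φ_k'(x) = 0). Then with μ(x) = x^{2−α}: ∫₀¹ μ φ₁ φ_k dx = (2(2−α)/(λ_k−λ₁)²) · φ₁'(1) φ_k'(1). -/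
open MeasureTheory Filter Set

lemma tendsto_helper {f : ℝ → ℝ} (hf : IntegrableOn f (Ioc 0 1)) :
    Tendsto (fun a => ∫ x in a..1, f x) (nhdsWithin (0:ℝ) (Ioi 0))
      (nhds (∫ x in Ioc (0:ℝ) 1, f x)) := by
  have hIcc : IntegrableOn f (Icc 0 1) := by
    rwa [integrableOn_Icc_iff_integrableOn_Ioc]
  have hc : ContinuousOn (fun x => ∫ t in Ioc (0:ℝ) x, f t) (Icc 0 1) :=
    intervalIntegral.continuousOn_primitive hIcc
  have h0 : ContinuousWithinAt (fun x => ∫ t in Ioc (0:ℝ) x, f t) (Icc 0 1) 0 :=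
    hc 0 (by constructor <;> norm_num)
  have h1 : Tendsto (fun a => ∫ t in Ioc (0:ℝ) a, f t) (nhdsWithin 0 (Icc 0 1)) (nhds 0) := by
    have : (∫ t in Ioc (0:ℝ) 0, f t) = 0 := by simp
    simpa [ContinuousWithinAt, this] using h0
  have hmem : nhdsWithin (0:ℝ) (Ioi 0) = nhdsWithin (0:ℝ) (Ioo 0 1) := by
    rw [show Ioo (0:ℝ) 1 = Ioi 0 ∩ Iio 1 from (Ioi_inter_Iio).symm,
      ← nhdsWithin_restrict _ (by norm_num) isOpen_Iio]
  have h2 : Tendsto (fun a => ∫ t in Ioc (0:ℝ) a, f t) (nhdsWithin (0:ℝ) (Ioi 0)) (nhds 0) := by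
    rw [hmem]
    exact h1.mono_left (nhdsWithin_mono _ Ioo_subset_Icc_self)
  have key : ∀ a ∈ Ioo (0:ℝ) 1, ∫ x in a..1, f x
      = (∫ x in Ioc (0:ℝ) 1, f x) - ∫ t in Ioc (0:ℝ) a, f t := by
    intro a ha
    have i1 : IntervalIntegrable f volume 0 a := by
      rw [intervalIntegrable_iff_integrableOn_Ioc_of_le ha.1.le]
      exact hf.mono_set (Ioc_subset_Ioc le_rfl ha.2.le)
    have i2 : IntervalIntegrable f volume a 1 := by
      rw [intervalIntegrable_iff_integrableOn_Ioc_of_le ha.2.le]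
      exact hf.mono_set (Ioc_subset_Ioc ha.1.le le_rfl)
    have h3 := intervalIntegral.integral_add_adjacent_intervals i1 i2
    rw [intervalIntegral.integral_of_le ha.1.le, intervalIntegral.integral_of_le zero_le_one] at h3
    linarith
  have h4 : Tendsto (fun a => (∫ x in Ioc (0:ℝ) 1, f x) - ∫ t in Ioc (0:ℝ) a, f t)
      (nhdsWithin (0:ℝ) (Ioi 0)) (nhds ((∫ x in Ioc (0:ℝ) 1, f x) - 0)) :=
    tendsto_const_nhds.sub h2
  rw [sub_zero] at h4
  refine h4.congr' ?_
  filter_upwards [Ioo_mem_nhdsGT one_pos] with a ha using (key a ha).symm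

lemma pkg_hasDerivAt {φ : ℝ → ℝ} (h : ContDiffOn ℝ 2 φ (Ioi 0)) {x : ℝ} (hx : 0 < x) :
    HasDerivAt φ (deriv φ x) x :=
  ((h.differentiableOn (by norm_num)).differentiableAt (isOpen_Ioi.mem_nhds hx)).hasDerivAt

lemma pkg_deriv_contDiffOn {φ : ℝ → ℝ} (h : ContDiffOn ℝ 2 φ (Ioi 0)) :
    ContDiffOn ℝ 1 (deriv φ) (Ioi 0) := by
  have := h.deriv_of_isOpen isOpen_Ioi (m := 1) (by norm_num)
  exact this

lemma pkg_hasDerivAt_deriv {φ : ℝ → ℝ} (h : ContDiffOn ℝ 2 φ (Ioi 0)) {x : ℝ} (hx : 0 < x) :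
    HasDerivAt (deriv φ) (deriv (deriv φ) x) x :=
  (((pkg_deriv_contDiffOn h).differentiableOn one_ne_zero).differentiableAt
    (isOpen_Ioi.mem_nhds hx)).hasDerivAt

lemma rpow_contDiffOn (p : ℝ) : ContDiffOn ℝ 1 (fun y : ℝ => y ^ p) (Ioi 0) :=
  fun _ hx => (Real.contDiffAt_rpow_const_of_ne (ne_of_gt hx)).contDiffWithinAt

lemma g_contDiffOn {φ : ℝ → ℝ} (h : ContDiffOn ℝ 2 φ (Ioi 0)) (p : ℝ) :
    ContDiffOn ℝ 1 (fun y => y ^ p * deriv φ y) (Ioi 0) :=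
  (rpow_contDiffOn p).mul (pkg_deriv_contDiffOn h)

lemma g_hasDerivAt {φ : ℝ → ℝ} (h : ContDiffOn ℝ 2 φ (Ioi 0)) (p : ℝ) {x : ℝ} (hx : 0 < x) :
    HasDerivAt (fun y => y ^ p * deriv φ y)
      (p * x ^ (p - 1) * deriv φ x + x ^ p * deriv (deriv φ) x) x :=
  (Real.hasDerivAt_rpow_const (Or.inl hx.ne')).mul (pkg_hasDerivAt_deriv h hx)

lemma g_deriv_cont {φ : ℝ → ℝ} (h : ContDiffOn ℝ 2 φ (Ioi 0)) (p : ℝ) :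
    ContinuousOn (deriv (fun y => y ^ p * deriv φ y)) (Ioi 0) :=
  (g_contDiffOn h p).continuousOn_deriv_of_isOpen isOpen_Ioi le_rfl

lemma pkg_deriv2_cont {φ : ℝ → ℝ} (h : ContDiffOn ℝ 2 φ (Ioi 0)) :
    ContinuousOn (deriv (deriv φ)) (Ioi 0) :=
  (pkg_deriv_contDiffOn h).continuousOn_deriv_of_isOpen isOpen_Ioi le_rfl

lemma ae_ne_one : ∀ᵐ (x : ℝ), x ≠ (1:ℝ) := by
  rw [ae_iff]
  simp

theorem coupling_coefficient_identity
    (α lam1 lamk : ℝ) (hα : 0 ≤ α ∧ α < 2) (hne : lam1 ≠ lamk)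
    (φ₁ φk : ℝ → ℝ)
    (hsm1 : ContDiffOn ℝ 2 φ₁ (Set.Ioi 0)) (hsmk : ContDiffOn ℝ 2 φk (Set.Ioi 0))
    (hode1 : ∀ x ∈ Set.Ioo (0:ℝ) 1,
      -deriv (fun y => y ^ α * deriv φ₁ y) x = lam1 * φ₁ x)
    (hodek : ∀ x ∈ Set.Ioo (0:ℝ) 1,
      -deriv (fun y => y ^ α * deriv φk y) x = lamk * φk x)
    (hb1 : φ₁ 1 = 0) (hbk : φk 1 = 0)
    (horth : ∫ x in Set.Ioc (0:ℝ) 1, φ₁ x * φk x = 0)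
    (hint : MeasureTheory.IntegrableOn (fun x => φ₁ x * φk x) (Set.Ioc 0 1))
    (hintμ : MeasureTheory.IntegrableOn (fun x => x ^ (2 - α) * φ₁ x * φk x) (Set.Ioc 0 1))
    (hlim1 : Filter.Tendsto (fun x => x ^ (2 - α) * (x ^ α * deriv φk x) * φ₁ x)
      (nhdsWithin (0:ℝ) (Set.Ioi 0)) (nhds 0))
    (hlim2 : Filter.Tendsto (fun x => x ^ (2 - α) * (x ^ α * deriv φ₁ x) * φk x)
      (nhdsWithin (0:ℝ) (Set.Ioi 0)) (nhds 0))
    (hlim3 : Filter.Tendsto (fun x => x ^ (1 + α) * deriv φ₁ x * deriv φk x)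
      (nhdsWithin (0:ℝ) (Set.Ioi 0)) (nhds 0))
    (hlim4 : Filter.Tendsto (fun x => x * φ₁ x * φk x)
      (nhdsWithin (0:ℝ) (Set.Ioi 0)) (nhds 0))
    (hlim5 : Filter.Tendsto
      (fun x => deriv (fun y => y * deriv φ₁ y) x * (x ^ α * φk x))
      (nhdsWithin (0:ℝ) (Set.Ioi 0)) (nhds 0)) :
    ∫ x in Set.Ioc (0:ℝ) 1, x ^ (2 - α) * φ₁ x * φk x
      = 2 * (2 - α) / (lamk - lam1) ^ 2 * (deriv φ₁ 1 * deriv φk 1) := by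
  obtain ⟨hα0, hα2⟩ := hα
  have hlamne : lamk - lam1 ≠ 0 := sub_ne_zero.2 (Ne.symm hne)
  set D : ℝ := deriv φ₁ 1 * deriv φk 1 with hD
  set I₀ : ℝ := ∫ x in Set.Ioc (0:ℝ) 1, x ^ (2 - α) * φ₁ x * φk x with hI₀
  -- the two key interval identities
  have key1 : ∀ a ∈ Ioo (0:ℝ) 1,
      (lamk - lam1) * (∫ x in a..1, x ^ (2 - α) * φ₁ x * φk x)
        = a ^ (2 - α) * (a ^ α * deriv φk a) * φ₁ a
          - a ^ (2 - α) * (a ^ α * deriv φ₁ a) * φk a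
          + (2 - α) * (-(2 * (∫ x in a..1, x * deriv φ₁ x * φk x))
              - a * φ₁ a * φk a - ∫ x in a..1, φ₁ x * φk x) := by
    intro a ha
    obtain ⟨ha0, ha1⟩ := ha
    have hsub : uIcc a 1 ⊆ Ioi 0 := by
      rw [uIcc_of_le ha1.le]
      exact fun x hx => lt_of_lt_of_le ha0 hx.1
    have hc1 : ContinuousOn φ₁ (uIcc a 1) := hsm1.continuousOn.mono hsub
    have hck : ContinuousOn φk (uIcc a 1) := hsmk.continuousOn.mono hsub
    have hcd1 : ContinuousOn (deriv φ₁) (uIcc a 1) :=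
      (pkg_deriv_contDiffOn hsm1).continuousOn.mono hsub
    have hcdk : ContinuousOn (deriv φk) (uIcc a 1) :=
      (pkg_deriv_contDiffOn hsmk).continuousOn.mono hsub
    have hcr : ∀ p : ℝ, ContinuousOn (fun y : ℝ => y ^ p) (uIcc a 1) := fun p =>
      (rpow_contDiffOn p).continuousOn.mono hsub
    have hcid : ContinuousOn (fun y : ℝ => y) (uIcc a 1) := continuousOn_id
    have hmemIoo : ∀ {x : ℝ}, x ∈ Set.uIoc a 1 → x ≠ 1 → x ∈ Ioo (0:ℝ) 1 := by
      intro x hx hne1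
      rw [uIoc_of_le ha1.le] at hx
      exact ⟨lt_trans ha0 hx.1, lt_of_le_of_ne hx.2 hne1⟩
    have ibp1 : (∫ x in a..1, (x ^ (2-α) * φ₁ x) * deriv (fun y => y ^ α * deriv φk y) x)
        = ((1:ℝ) ^ (2-α) * φ₁ 1) * ((1:ℝ) ^ α * deriv φk 1)
          - (a ^ (2-α) * φ₁ a) * (a ^ α * deriv φk a)
          - ∫ x in a..1, ((2-α) * x ^ (2-α-1) * φ₁ x + x ^ (2-α) * deriv φ₁ x)
              * (x ^ α * deriv φk x) :=
      intervalIntegral.integral_mul_deriv_eq_deriv_mul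
        (fun x hx => (Real.hasDerivAt_rpow_const
            (Or.inl (mem_Ioi.mp (hsub hx)).ne')).mul (pkg_hasDerivAt hsm1 (mem_Ioi.mp (hsub hx))))
        (fun x hx => (g_hasDerivAt hsmk α (mem_Ioi.mp (hsub hx))).differentiableAt.hasDerivAt)
        ((((continuousOn_const.mul (hcr (2-α-1))).mul hc1).add
          ((hcr (2-α)).mul hcd1)).intervalIntegrable)
        (((g_deriv_cont hsmk α).mono hsub).intervalIntegrable)
    have ibp2 : (∫ x in a..1, (x ^ (2-α) * φk x) * deriv (fun y => y ^ α * deriv φ₁ y) x)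
        = ((1:ℝ) ^ (2-α) * φk 1) * ((1:ℝ) ^ α * deriv φ₁ 1)
          - (a ^ (2-α) * φk a) * (a ^ α * deriv φ₁ a)
          - ∫ x in a..1, ((2-α) * x ^ (2-α-1) * φk x + x ^ (2-α) * deriv φk x)
              * (x ^ α * deriv φ₁ x) :=
      intervalIntegral.integral_mul_deriv_eq_deriv_mul
        (fun x hx => (Real.hasDerivAt_rpow_const
            (Or.inl (mem_Ioi.mp (hsub hx)).ne')).mul (pkg_hasDerivAt hsmk (mem_Ioi.mp (hsub hx))))
        (fun x hx => (g_hasDerivAt hsm1 α (mem_Ioi.mp (hsub hx))).differentiableAt.hasDerivAt)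
        ((((continuousOn_const.mul (hcr (2-α-1))).mul hck).add
          ((hcr (2-α)).mul hcdk)).intervalIntegrable)
        (((g_deriv_cont hsm1 α).mono hsub).intervalIntegrable)
    have lhs1 : (∫ x in a..1, (x ^ (2-α) * φ₁ x) * deriv (fun y => y ^ α * deriv φk y) x)
        = -lamk * ∫ x in a..1, x ^ (2-α) * φ₁ x * φk x := by
      rw [← intervalIntegral.integral_const_mul]
      refine intervalIntegral.integral_congr_ae ?_
      filter_upwards [ae_ne_one] with x hx1 hxI
      have h2 := hodek x (hmemIoo hxI hx1)
      have hdg : deriv (fun y => y ^ α * deriv φk y) x = -(lamk * φk x) := by linarith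
      rw [hdg]; ring
    have lhs2 : (∫ x in a..1, (x ^ (2-α) * φk x) * deriv (fun y => y ^ α * deriv φ₁ y) x)
        = -lam1 * ∫ x in a..1, x ^ (2-α) * φ₁ x * φk x := by
      rw [← intervalIntegral.integral_const_mul]
      refine intervalIntegral.integral_congr_ae ?_
      filter_upwards [ae_ne_one] with x hx1 hxI
      have h2 := hode1 x (hmemIoo hxI hx1)
      have hdg : deriv (fun y => y ^ α * deriv φ₁ y) x = -(lam1 * φ₁ x) := by linarith
      rw [hdg]; ring
    have A1 := ibp1; rw [lhs1, hb1] at A1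
    have A2 := ibp2; rw [lhs2, hbk] at A2
    have iK : IntervalIntegrable (fun x => x * deriv φ₁ x * φk x) volume a 1 :=
      ((hcid.mul hcd1).mul hck).intervalIntegrable
    have iL : IntervalIntegrable (fun x => x * φ₁ x * deriv φk x) volume a 1 :=
      ((hcid.mul hc1).mul hcdk).intervalIntegrable
    have iP : IntervalIntegrable (fun x => φ₁ x * φk x) volume a 1 :=
      (hc1.mul hck).intervalIntegrable
    have int1 : IntervalIntegrable
        (fun x => ((2-α) * x ^ (2-α-1) * φ₁ x + x ^ (2-α) * deriv φ₁ x)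
          * (x ^ α * deriv φk x)) volume a 1 :=
      ((((continuousOn_const.mul (hcr (2-α-1))).mul hc1).add
        ((hcr (2-α)).mul hcd1)).mul ((hcr α).mul hcdk)).intervalIntegrable
    have int2 : IntervalIntegrable
        (fun x => ((2-α) * x ^ (2-α-1) * φk x + x ^ (2-α) * deriv φk x)
          * (x ^ α * deriv φ₁ x)) volume a 1 :=
      ((((continuousOn_const.mul (hcr (2-α-1))).mul hck).add
        ((hcr (2-α)).mul hcdk)).mul ((hcr α).mul hcd1)).intervalIntegrable
    have hsplitR :
        (∫ x in a..1, ((2-α) * x ^ (2-α-1) * φ₁ x + x ^ (2-α) * deriv φ₁ x)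
            * (x ^ α * deriv φk x))
          - (∫ x in a..1, ((2-α) * x ^ (2-α-1) * φk x + x ^ (2-α) * deriv φk x)
            * (x ^ α * deriv φ₁ x))
        = (2-α) * ((∫ x in a..1, x * φ₁ x * deriv φk x)
            - ∫ x in a..1, x * deriv φ₁ x * φk x) := by
      rw [← intervalIntegral.integral_sub iL iK, ← intervalIntegral.integral_const_mul,
        ← intervalIntegral.integral_sub int1 int2]
      refine intervalIntegral.integral_congr fun x hx => ?_
      have hx0 : (0:ℝ) < x := mem_Ioi.mp (hsub hx)
      have hxa : x ^ (2-α-1) * x ^ α = x := by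
        rw [← Real.rpow_add hx0, show (2-α-1+α : ℝ) = 1 by ring, Real.rpow_one]
      linear_combination ((2-α) * (φ₁ x * deriv φk x - deriv φ₁ x * φk x)) * hxa
    have ibp0 : (∫ x in a..1, x * φ₁ x * deriv φk x)
        = (1 * φ₁ 1) * φk 1 - (a * φ₁ a) * φk a
          - ∫ x in a..1, (φ₁ x + x * deriv φ₁ x) * φk x :=
      intervalIntegral.integral_mul_deriv_eq_deriv_mul
        (fun x hx => by simpa [Pi.mul_def] using (hasDerivAt_id x).mul (pkg_hasDerivAt hsm1 (mem_Ioi.mp (hsub hx))))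
        (fun x hx => pkg_hasDerivAt hsmk (mem_Ioi.mp (hsub hx)))
        ((hc1.add (hcid.mul hcd1)).intervalIntegrable)
        (hcdk.intervalIntegrable)
    have hPK : (∫ x in a..1, (φ₁ x + x * deriv φ₁ x) * φk x)
        = (∫ x in a..1, φ₁ x * φk x) + ∫ x in a..1, x * deriv φ₁ x * φk x := by
      rw [← intervalIntegral.integral_add iP iK]
      exact intervalIntegral.integral_congr fun x _ => by ring
    have A3 := ibp0; rw [hb1, hPK] at A3
    linear_combination (-1 : ℝ) * A1 + A2 + hsplitR + (2-α) * A3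
  have key2 : ∀ a ∈ Ioo (0:ℝ) 1,
      (lamk - lam1) * (∫ x in a..1, x * deriv φ₁ x * φk x)
        = -D + (a * deriv φ₁ a) * (a ^ α * deriv φk a)
          - (-(lam1 * (a * φ₁ a)) + (1 - α) * (a ^ α * deriv φ₁ a)) * φk a
          + lam1 * (2 - α) * (∫ x in a..1, φ₁ x * φk x) := by
    intro a ha
    obtain ⟨ha0, ha1⟩ := ha
    have hsub : uIcc a 1 ⊆ Ioi 0 := by
      rw [uIcc_of_le ha1.le]
      exact fun x hx => lt_of_lt_of_le ha0 hx.1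
    have hc1 : ContinuousOn φ₁ (uIcc a 1) := hsm1.continuousOn.mono hsub
    have hck : ContinuousOn φk (uIcc a 1) := hsmk.continuousOn.mono hsub
    have hcd1 : ContinuousOn (deriv φ₁) (uIcc a 1) :=
      (pkg_deriv_contDiffOn hsm1).continuousOn.mono hsub
    have hcdk : ContinuousOn (deriv φk) (uIcc a 1) :=
      (pkg_deriv_contDiffOn hsmk).continuousOn.mono hsub
    have hcd21 : ContinuousOn (deriv (deriv φ₁)) (uIcc a 1) :=
      (pkg_deriv2_cont hsm1).mono hsub
    have hcr : ∀ p : ℝ, ContinuousOn (fun y : ℝ => y ^ p) (uIcc a 1) := fun p =>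
      (rpow_contDiffOn p).continuousOn.mono hsub
    have hcid : ContinuousOn (fun y : ℝ => y) (uIcc a 1) := continuousOn_id
    have hmemIoo : ∀ {x : ℝ}, x ∈ Set.uIoc a 1 → x ≠ 1 → x ∈ Ioo (0:ℝ) 1 := by
      intro x hx hne1
      rw [uIoc_of_le ha1.le] at hx
      exact ⟨lt_trans ha0 hx.1, lt_of_le_of_ne hx.2 hne1⟩
    have ibp3 : (∫ x in a..1, (x * deriv φ₁ x) * deriv (fun y => y ^ α * deriv φk y) x)
        = (1 * deriv φ₁ 1) * ((1:ℝ) ^ α * deriv φk 1)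
          - (a * deriv φ₁ a) * (a ^ α * deriv φk a)
          - ∫ x in a..1, (deriv φ₁ x + x * deriv (deriv φ₁) x) * (x ^ α * deriv φk x) :=
      intervalIntegral.integral_mul_deriv_eq_deriv_mul
        (fun x hx => by
          simpa [Pi.mul_def] using (hasDerivAt_id x).mul (pkg_hasDerivAt_deriv hsm1 (mem_Ioi.mp (hsub hx))))
        (fun x hx => (g_hasDerivAt hsmk α (mem_Ioi.mp (hsub hx))).differentiableAt.hasDerivAt)
        ((hcd1.add (hcid.mul hcd21)).intervalIntegrable)
        (((g_deriv_cont hsmk α).mono hsub).intervalIntegrable)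
    have lhs3 : (∫ x in a..1, (x * deriv φ₁ x) * deriv (fun y => y ^ α * deriv φk y) x)
        = -lamk * ∫ x in a..1, x * deriv φ₁ x * φk x := by
      rw [← intervalIntegral.integral_const_mul]
      refine intervalIntegral.integral_congr_ae ?_
      filter_upwards [ae_ne_one] with x hx1 hxI
      have h2 := hodek x (hmemIoo hxI hx1)
      have hdg : deriv (fun y => y ^ α * deriv φk y) x = -(lamk * φk x) := by linarith
      rw [hdg]; ring
    have A4 := ibp3
    rw [lhs3] at A4
    simp only [one_mul, Real.one_rpow] at A4
    have hsplit3 : (∫ x in a..1, (deriv φ₁ x + x * deriv (deriv φ₁) x) * (x ^ α * deriv φk x))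
        = ∫ x in a..1, (-(lam1 * (x * φ₁ x)) + (1-α) * (x ^ α * deriv φ₁ x)) * deriv φk x := by
      refine intervalIntegral.integral_congr_ae ?_
      filter_upwards [ae_ne_one] with x hx1 hxI
      have hxm := hmemIoo hxI hx1
      have hx0 : (0:ℝ) < x := hxm.1
      have hg : α * x ^ (α-1) * deriv φ₁ x + x ^ α * deriv (deriv φ₁) x = -(lam1 * φ₁ x) := by
        have h1 := (g_hasDerivAt hsm1 α hx0).deriv
        have h2 := hode1 x hxm
        rw [h1] at h2; linarith
      have hxa : x * x ^ (α-1) = x ^ α := by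
        rw [Real.rpow_sub hx0, Real.rpow_one]; field_simp
      linear_combination (x * deriv φk x) * hg - (α * deriv φ₁ x * deriv φk x) * hxa
    have ibp4 : (∫ x in a..1, (-(lam1 * (x * φ₁ x)) + (1-α) * (x ^ α * deriv φ₁ x)) * deriv φk x)
        = (-(lam1 * (1 * φ₁ 1)) + (1-α) * ((1:ℝ) ^ α * deriv φ₁ 1)) * φk 1
          - (-(lam1 * (a * φ₁ a)) + (1-α) * (a ^ α * deriv φ₁ a)) * φk a
          - ∫ x in a..1, (-(lam1 * (φ₁ x + x * deriv φ₁ x))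
              + (1-α) * (α * x ^ (α-1) * deriv φ₁ x + x ^ α * deriv (deriv φ₁) x)) * φk x :=
      intervalIntegral.integral_mul_deriv_eq_deriv_mul
        (fun x hx => by
          have hx0 := mem_Ioi.mp (hsub hx)
          have h := (HasDerivAt.const_mul lam1
            ((hasDerivAt_id x).mul (pkg_hasDerivAt hsm1 hx0))).neg.add
            (HasDerivAt.const_mul (1-α) (g_hasDerivAt hsm1 α hx0))
          simpa [Pi.neg_def, Pi.add_def] using h)
        (fun x hx => pkg_hasDerivAt hsmk (mem_Ioi.mp (hsub hx)))
        ((((continuousOn_const.mul (hc1.add (hcid.mul hcd1))).neg).add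
          (continuousOn_const.mul (((continuousOn_const.mul (hcr (α-1))).mul hcd1).add
            ((hcr α).mul hcd21)))).intervalIntegrable)
        (hcdk.intervalIntegrable)
    have A5 := ibp4; rw [hbk] at A5
    have iP' : IntervalIntegrable (fun x => -(lam1 * (2-α)) * (φ₁ x * φk x)) volume a 1 :=
      (continuousOn_const.mul (hc1.mul hck)).intervalIntegrable
    have iK' : IntervalIntegrable (fun x => -lam1 * (x * deriv φ₁ x * φk x)) volume a 1 :=
      (continuousOn_const.mul ((hcid.mul hcd1).mul hck)).intervalIntegrable
    have hsplit4 : (∫ x in a..1, (-(lam1 * (φ₁ x + x * deriv φ₁ x))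
          + (1-α) * (α * x ^ (α-1) * deriv φ₁ x + x ^ α * deriv (deriv φ₁) x)) * φk x)
        = -(lam1 * (2-α)) * (∫ x in a..1, φ₁ x * φk x)
          + -lam1 * ∫ x in a..1, x * deriv φ₁ x * φk x := by
      rw [← intervalIntegral.integral_const_mul, ← intervalIntegral.integral_const_mul,
        ← intervalIntegral.integral_add iP' iK']
      refine intervalIntegral.integral_congr_ae ?_
      filter_upwards [ae_ne_one] with x hx1 hxI
      have hxm := hmemIoo hxI hx1
      have hx0 : (0:ℝ) < x := hxm.1
      have hg : α * x ^ (α-1) * deriv φ₁ x + x ^ α * deriv (deriv φ₁) x = -(lam1 * φ₁ x) := by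
        have h1 := (g_hasDerivAt hsm1 α hx0).deriv
        have h2 := hode1 x hxm
        rw [h1] at h2; linarith
      linear_combination ((1-α) * φk x) * hg
    linear_combination (-1 : ℝ) * A4 + hsplit3 + A5 - hsplit4 + hD
  -- limits
  have hP : Tendsto (fun a => ∫ x in a..1, φ₁ x * φk x)
      (nhdsWithin (0:ℝ) (Ioi 0)) (nhds 0) := by
    have := tendsto_helper hint
    rwa [horth] at this
  have hI : Tendsto (fun a => ∫ x in a..1, x ^ (2 - α) * φ₁ x * φk x)
      (nhdsWithin (0:ℝ) (Ioi 0)) (nhds I₀) := tendsto_helper hintμ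
  have hB3 : Tendsto (fun a => (a * deriv φ₁ a) * (a ^ α * deriv φk a))
      (nhdsWithin (0:ℝ) (Ioi 0)) (nhds 0) := by
    refine hlim3.congr' ?_
    filter_upwards [self_mem_nhdsWithin] with a (ha : (0:ℝ) < a)
    rw [Real.rpow_add ha, Real.rpow_one]
    ring
  have hB4 : Tendsto (fun a => (-(lam1 * (a * φ₁ a)) + (1 - α) * (a ^ α * deriv φ₁ a)) * φk a)
      (nhdsWithin (0:ℝ) (Ioi 0)) (nhds 0) := by
    refine hlim5.congr' ?_
    filter_upwards [Ioo_mem_nhdsGT one_pos] with a ha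
    have ha0 : (0:ℝ) < a := ha.1
    have hw : deriv (fun y => y * deriv φ₁ y) a = deriv φ₁ a + a * deriv (deriv φ₁) a := by
      have h := (hasDerivAt_id' a).mul (pkg_hasDerivAt_deriv hsm1 ha0)
      simpa [Pi.mul_def] using h.deriv
    have hg : α * a ^ (α - 1) * deriv φ₁ a + a ^ α * deriv (deriv φ₁) a = -(lam1 * φ₁ a) := by
      have h1 := (g_hasDerivAt hsm1 α ha0).deriv
      have h2 := hode1 a ha
      rw [h1] at h2
      linarith
    have hxa : a * a ^ (α - 1) = a ^ α := by
      rw [Real.rpow_sub ha0, Real.rpow_one]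
      field_simp
    rw [hw]
    linear_combination (a * φk a) * hg - (α * deriv φ₁ a * φk a) * hxa
  -- limit of K via key2
  have hK : Tendsto (fun a => ∫ x in a..1, x * deriv φ₁ x * φk x)
      (nhdsWithin (0:ℝ) (Ioi 0)) (nhds (-D / (lamk - lam1))) := by
    have hRHS2 : Tendsto (fun a => -D + (a * deriv φ₁ a) * (a ^ α * deriv φk a)
        - (-(lam1 * (a * φ₁ a)) + (1 - α) * (a ^ α * deriv φ₁ a)) * φk a
        + lam1 * (2 - α) * (∫ x in a..1, φ₁ x * φk x))
        (nhdsWithin (0:ℝ) (Ioi 0)) (nhds (-D + 0 - 0 + lam1 * (2 - α) * 0)) :=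
      ((tendsto_const_nhds.add hB3).sub hB4).add (hP.const_mul (lam1 * (2 - α)))
    have h1 : Tendsto (fun a => (lamk - lam1) * (∫ x in a..1, x * deriv φ₁ x * φk x))
        (nhdsWithin (0:ℝ) (Ioi 0)) (nhds (-D)) := by
      have h2 : Tendsto (fun a => (lamk - lam1) * (∫ x in a..1, x * deriv φ₁ x * φk x))
          (nhdsWithin (0:ℝ) (Ioi 0)) (nhds (-D + 0 - 0 + lam1 * (2 - α) * 0)) := by
        refine hRHS2.congr' ?_
        filter_upwards [Ioo_mem_nhdsGT one_pos] with a ha using (key2 a ha).symm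
      simpa using h2
    have h2 := h1.const_mul ((lamk - lam1)⁻¹)
    have h3 : Tendsto (fun a => ∫ x in a..1, x * deriv φ₁ x * φk x)
        (nhdsWithin (0:ℝ) (Ioi 0)) (nhds ((lamk - lam1)⁻¹ * (-D))) := by
      refine h2.congr (fun a => ?_)
      rw [← mul_assoc, inv_mul_cancel₀ hlamne, one_mul]
    have : (lamk - lam1)⁻¹ * (-D) = -D / (lamk - lam1) := by
      rw [div_eq_inv_mul]
    rwa [this] at h3
  -- conclude via key1
  have hRHS1 : Tendsto (fun a => a ^ (2 - α) * (a ^ α * deriv φk a) * φ₁ a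
      - a ^ (2 - α) * (a ^ α * deriv φ₁ a) * φk a
      + (2 - α) * (-(2 * (∫ x in a..1, x * deriv φ₁ x * φk x))
          - a * φ₁ a * φk a - ∫ x in a..1, φ₁ x * φk x))
      (nhdsWithin (0:ℝ) (Ioi 0))
      (nhds ((0:ℝ) - 0 + (2 - α) * (-(2 * (-D / (lamk - lam1))) - 0 - 0))) :=
    (hlim1.sub hlim2).add ((((hK.const_mul 2).neg.sub hlim4).sub hP).const_mul (2 - α))
  have h4 : Tendsto (fun a => (lamk - lam1) * (∫ x in a..1, x ^ (2 - α) * φ₁ x * φk x))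
      (nhdsWithin (0:ℝ) (Ioi 0))
      (nhds ((0:ℝ) - 0 + (2 - α) * (-(2 * (-D / (lamk - lam1))) - 0 - 0))) := by
    refine hRHS1.congr' ?_
    filter_upwards [Ioo_mem_nhdsGT one_pos] with a ha using (key1 a ha).symm
  have h5 : Tendsto (fun a => (lamk - lam1) * (∫ x in a..1, x ^ (2 - α) * φ₁ x * φk x))
      (nhdsWithin (0:ℝ) (Ioi 0)) (nhds ((lamk - lam1) * I₀)) := hI.const_mul _
  have huniq : (lamk - lam1) * I₀
      = (0:ℝ) - 0 + (2 - α) * (-(2 * (-D / (lamk - lam1))) - 0 - 0) :=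
    tendsto_nhds_unique h5 h4
  have hval : (0:ℝ) - 0 + (2 - α) * (-(2 * (-D / (lamk - lam1))) - 0 - 0)
      = (lamk - lam1) * (2 * (2 - α) / (lamk - lam1) ^ 2 * D) := by
    field_simp
    ring
  rw [hval] at huniq
  exact mul_left_cancel₀ hlamne huniq
end

section
/- Let α ∈ [1, 3/2). For every v ∈ L²(0,1) absolutely continuous on (0,1] with v(1) = 0, x^α v' ∈ H¹(0,1) and (x^α v')(0) = 0, the function x ↦ x^{1/2} v(x) is absolutely continuous on [0,1] and lim_{x→0+} x^{1/2} v(x) = 0. -/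
set_option maxHeartbeats 1000000

open MeasureTheory Filter Set

theorem sqrt_v_absolutely_continuous_and_limit_zero
    (α : ℝ) (hα : 1 ≤ α ∧ α < 3/2) (v g : ℝ → ℝ)
    (hv2 : MeasureTheory.IntegrableOn (fun x => v x ^ 2) (Set.Ioc 0 1))
    (hvFTC : ∀ y ∈ Set.Ioc (0:ℝ) 1, v 1 - v y = ∫ x in y..1, deriv v x)
    (hvint : ∀ y ∈ Set.Ioc (0:ℝ) 1, IntervalIntegrable (deriv v) volume y 1)
    (hv1 : v 1 = 0)
    (hg2 : MeasureTheory.IntegrableOn (fun x => g x ^ 2) (Set.Ioc 0 1))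
    (hgFTC : ∀ x ∈ Set.Ioc (0:ℝ) 1, x ^ α * deriv v x = ∫ t in Set.Ioc (0:ℝ) x, g t) :
    (∀ y ∈ Set.Ioc (0:ℝ) 1,
      Real.sqrt 1 * v 1 - Real.sqrt y * v y
        = ∫ x in y..1, deriv (fun t => Real.sqrt t * v t) x) ∧
    MeasureTheory.IntegrableOn (deriv (fun t => Real.sqrt t * v t)) (Set.Ioc 0 1) ∧
    Filter.Tendsto (fun x => Real.sqrt x * v x) (nhdsWithin (0:ℝ) (Set.Ioi 0)) (nhds 0) := by
  obtain ⟨hα1, hα2⟩ := hα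
  have h2lt : (-1:ℝ) < 1/2 - α := by linarith
  set f := deriv v with hfdef
  set G := ∫ t in Ioc (0:ℝ) 1, g t ^ 2 with hGdef
  have hG0 : 0 ≤ G := setIntegral_nonneg measurableSet_Ioc fun t _ => sq_nonneg _
  set C := (G + 1) / 2 with hCdef
  have hC0 : (0:ℝ) < C := by positivity
  -- pointwise bound on f = deriv v
  have hfb : ∀ x ∈ Ioc (0:ℝ) 1, |f x| ≤ C * x ^ ((1:ℝ)/2 - α) := by
    intro x hx
    have hx0 : (0:ℝ) < x := hx.1
    have hsx : (0:ℝ) < Real.sqrt x := Real.sqrt_pos.mpr hx0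
    have hxa : (0:ℝ) < x ^ α := Real.rpow_pos_of_pos hx0 α
    have hsub : Ioc (0:ℝ) x ⊆ Ioc (0:ℝ) 1 := Ioc_subset_Ioc_right hx.2
    have hg2x : IntegrableOn (fun t => g t ^ 2) (Ioc (0:ℝ) x) := hg2.mono_set hsub
    have hcint : IntegrableOn (fun _ : ℝ => 1/Real.sqrt x) (Ioc (0:ℝ) x) :=
      integrableOn_const measure_Ioc_lt_top.ne
    have hbint : IntegrableOn
        (fun t => (Real.sqrt x * g t ^ 2 + 1/Real.sqrt x)/2) (Ioc (0:ℝ) x) :=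
      ((hg2x.const_mul _).add hcint).div_const _
    have key : |∫ t in Ioc (0:ℝ) x, g t| ≤ Real.sqrt x * C := by
      have h1 : |∫ t in Ioc (0:ℝ) x, g t| ≤ ∫ t in Ioc (0:ℝ) x, |g t| := by
        simpa [Real.norm_eq_abs] using
          norm_integral_le_integral_norm (μ := volume.restrict (Ioc (0:ℝ) x)) g
      have h2 : (∫ t in Ioc (0:ℝ) x, |g t|)
          ≤ ∫ t in Ioc (0:ℝ) x, (Real.sqrt x * g t ^ 2 + 1/Real.sqrt x)/2 := by
        refine integral_mono_of_nonneg (ae_of_all _ fun t => abs_nonneg _) hbint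
          (ae_of_all _ fun t => ?_)
        have h3 : (0:ℝ) ≤ (Real.sqrt x * |g t| - 1)^2 := sq_nonneg _
        have h4 : Real.sqrt x * Real.sqrt x = x := Real.mul_self_sqrt hx0.le
        have h5 : |g t|^2 = g t ^ 2 := sq_abs _
        have h6 : 1/Real.sqrt x * Real.sqrt x = 1 := one_div_mul_cancel hsx.ne'
        nlinarith [abs_nonneg (g t), hsx]
      have h7 : (∫ t in Ioc (0:ℝ) x, (Real.sqrt x * g t ^ 2 + 1/Real.sqrt x)/2)
          = (Real.sqrt x * (∫ t in Ioc (0:ℝ) x, g t ^ 2) + (1/Real.sqrt x) * x)/2 := by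
        rw [integral_div, integral_add (hg2x.const_mul _) hcint, integral_const_mul,
          setIntegral_const]
        simp [Real.volume_Ioc, hx0.le, smul_eq_mul, mul_comm]
      have h8 : (∫ t in Ioc (0:ℝ) x, g t ^ 2) ≤ G :=
        setIntegral_mono_set hg2 (ae_of_all _ fun t => sq_nonneg _) hsub.eventuallyLE
      have h9 : (1/Real.sqrt x) * x = Real.sqrt x := by
        rw [one_div, inv_mul_eq_div, Real.div_sqrt]
      calc |∫ t in Ioc (0:ℝ) x, g t| ≤ _ := h1
        _ ≤ _ := h2
        _ = (Real.sqrt x * (∫ t in Ioc (0:ℝ) x, g t ^ 2) + (1/Real.sqrt x) * x)/2 := h7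
        _ ≤ (Real.sqrt x * G + Real.sqrt x)/2 := by
            rw [h9]; gcongr
        _ = Real.sqrt x * C := by rw [hCdef]; ring
    have h10 := hgFTC x hx
    have h11 : |f x| = |∫ t in Ioc (0:ℝ) x, g t| / x ^ α := by
      rw [← h10, abs_mul, abs_of_pos hxa, mul_comm, mul_div_assoc, div_self hxa.ne', mul_one]
    have h12 : C * x ^ ((1:ℝ)/2 - α) * x ^ α = Real.sqrt x * C := by
      rw [mul_assoc, ← Real.rpow_add hx0]
      norm_num
      rw [← Real.sqrt_eq_rpow]
      ring
    rw [h11, div_le_iff₀ hxa, h12]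
    exact key
  have hrint : ∀ r : ℝ, (-1:ℝ) < r → IntegrableOn (fun x : ℝ => x ^ r) (Ioc (0:ℝ) 1) volume :=
    fun r hr => (intervalIntegral.intervalIntegrable_rpow' hr (a := 0) (b := 1)).1
  have hfmeas : Measurable f := measurable_deriv v
  have hf_int : IntegrableOn f (Ioc (0:ℝ) 1) := by
    refine Integrable.mono' ((hrint _ h2lt).const_mul C) hfmeas.aestronglyMeasurable ?_
    exact (ae_restrict_iff' measurableSet_Ioc).mpr (ae_of_all _ fun x hx => by
      simpa [Real.norm_eq_abs] using hfb x hx)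
  have hint_uv : ∀ u w : ℝ, u ∈ Ioc (0:ℝ) 1 → w ∈ Ioc (0:ℝ) 1 →
      IntervalIntegrable f volume u w := by
    intro u w hu hw
    rw [intervalIntegrable_iff]
    refine hf_int.mono_set fun t ht => ?_
    exact ⟨lt_trans (lt_min hu.1 hw.1) ht.1, le_trans ht.2 (sup_le hu.2 hw.2)⟩
  have hvy : ∀ y ∈ Ioc (0:ℝ) 1, v y = -∫ x in Ioc y 1, f x := by
    intro z hz
    have h := hvFTC z hz
    rw [intervalIntegral.integral_of_le hz.2, hv1] at h
    linarith
  set M := ∫ x in Ioc (0:ℝ) 1, |f x| with hMdef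
  have hM0 : 0 ≤ M := setIntegral_nonneg measurableSet_Ioc fun t _ => abs_nonneg _
  have hvM : ∀ y ∈ Ioc (0:ℝ) 1, |v y| ≤ M := by
    intro z hz
    rw [hvy z hz, abs_neg]
    calc |∫ x in Ioc z 1, f x| ≤ ∫ x in Ioc z 1, |f x| := by
          simpa [Real.norm_eq_abs] using
            norm_integral_le_integral_norm (μ := volume.restrict (Ioc z 1)) f
      _ ≤ M := setIntegral_mono_set hf_int.abs (ae_of_all _ fun t => abs_nonneg _)
          (Ioc_subset_Ioc_left hz.1.le).eventuallyLE
  -- continuity of v on (0,1]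
  have hcont : ContinuousOn v (Ioc (0:ℝ) 1) := by
    have hf0 : Integrable ((Ioc (0:ℝ) 1).indicator f) volume :=
      (integrable_indicator_iff measurableSet_Ioc).mpr hf_int
    have hprim : Continuous fun s => ∫ τ in (1:ℝ)..s, (Ioc (0:ℝ) 1).indicator f τ :=
      intervalIntegral.continuous_primitive (fun a b => hf0.intervalIntegrable) 1
    refine ContinuousOn.congr hprim.continuousOn fun s hs => ?_
    rw [hvy s hs, ← intervalIntegral.integral_of_le hs.2, intervalIntegral.integral_symm s 1]
    congr 1
    refine intervalIntegral.integral_congr fun t ht => ?_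
    rw [uIcc_of_le hs.2] at ht
    exact (Set.indicator_of_mem
      (show t ∈ Ioc (0:ℝ) 1 from ⟨lt_of_lt_of_le hs.1 ht.1, ht.2⟩) f).symm
  -- a.e. differentiability of v on (0,1)
  have hdiff : ∀ a : ℝ, 0 < a → ∀ᵐ x : ℝ, x ∈ Ioo a 1 → DifferentiableAt ℝ v x := by
    intro a ha
    rcases le_or_gt 1 a with h1a | ha1
    · exact ae_of_all _ fun x hx => absurd hx.2 (not_lt.mpr (le_trans h1a hx.1.le))
    · set Ca := C * a ^ ((1:ℝ)/2 - α) with hCadef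
      have hCa0 : 0 ≤ Ca := by positivity
      have hIcc : Icc a 1 ⊆ Ioc (0:ℝ) 1 := fun t ht => ⟨lt_of_lt_of_le ha ht.1, ht.2⟩
      have hfbd : ∀ t ∈ Icc a 1, |f t| ≤ Ca := by
        intro t ht
        refine le_trans (hfb t (hIcc ht)) ?_
        rw [hCadef]
        exact mul_le_mul_of_nonneg_left
          (Real.rpow_le_rpow_of_nonpos ha ht.1 (by linarith)) hC0.le
      have hlip : LipschitzOnWith (Real.toNNReal Ca) v (Icc a 1) := by
        rw [lipschitzOnWith_iff_dist_le_mul]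
        intro b hb c hc
        rw [Real.dist_eq, Real.dist_eq, Real.coe_toNNReal _ hCa0]
        have hb' : b ∈ Ioc (0:ℝ) 1 := hIcc hb
        have hc' : c ∈ Ioc (0:ℝ) 1 := hIcc hc
        have hvbc : v b - v c = ∫ x in c..b, f x := by
          have h1 := hvFTC b hb'
          have h2 := hvFTC c hc'
          have h3 := intervalIntegral.integral_add_adjacent_intervals
            (hint_uv c b hc' hb') (hint_uv b 1 hb' ⟨one_pos, le_refl 1⟩)
          linarith
        rw [hvbc]
        have hb2 := intervalIntegral.norm_integral_le_of_norm_le_const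
          (C := Ca) (f := f) (a := c) (b := b) (fun t ht => by
            rw [Real.norm_eq_abs]
            exact hfbd t ⟨le_trans (le_inf hc.1 hb.1) ht.1.le,
              le_trans ht.2 (sup_le hc.2 hb.2)⟩)
        rw [Real.norm_eq_abs] at hb2
        calc |∫ x in c..b, f x| ≤ Ca * |b - c| := hb2
          _ = Ca * |b - c| := rfl
      have H := hlip.ae_differentiableWithinAt_of_mem (μ := volume)
      filter_upwards [H] with x hx hx2
      exact (hx (Ioo_subset_Icc_self hx2)).differentiableAt (Icc_mem_nhds hx2.1 hx2.2)
  have hae : ∀ᵐ x : ℝ, x ∈ Ioo (0:ℝ) 1 → DifferentiableAt ℝ v x := by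
    have H := ae_all_iff.mpr fun n : ℕ => hdiff (1/(n+1)) (by positivity)
    filter_upwards [H] with x hx hx01
    have hx0 : (0:ℝ) < x := hx01.1
    obtain ⟨n, hn⟩ := exists_nat_gt (1/x)
    refine hx n ⟨?_, hx01.2⟩
    rw [div_lt_iff₀ (by positivity : (0:ℝ) < (n:ℝ)+1)]
    rw [div_lt_iff₀ hx0] at hn
    nlinarith
  set φ : ℝ → ℝ := fun x => 1/(2*Real.sqrt x) * v x + Real.sqrt x * f x with hφdef
  have hkey : ∀ᵐ x : ℝ, x ∈ Ioo (0:ℝ) 1 → deriv (fun t => Real.sqrt t * v t) x = φ x := by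
    filter_upwards [hae] with x hx hx01
    have hx0 : (0:ℝ) < x := hx01.1
    have hd := hx hx01
    have hD := ((Real.hasDerivAt_sqrt hx0.ne').mul hd.hasDerivAt).deriv
    rw [hφdef]
    exact hD
  have hφae : deriv (fun t => Real.sqrt t * v t) =ᵐ[volume.restrict (Ioc (0:ℝ) 1)] φ := by
    rw [← Measure.restrict_congr_set (Ioo_ae_eq_Ioc (a := (0:ℝ)) (b := 1))]
    exact (ae_restrict_iff' measurableSet_Ioo).mpr hkey
  have hφ1 : IntegrableOn (fun x => 1/(2*Real.sqrt x) * v x) (Ioc (0:ℝ) 1) := by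
    refine Integrable.mono' ((hrint (-(1/2)) (by norm_num)).const_mul (M/2)) ?_ ?_
    · refine ContinuousOn.aestronglyMeasurable (ContinuousOn.mul ?_ hcont) measurableSet_Ioc
      refine ContinuousOn.div continuousOn_const
        ((continuous_const.mul Real.continuous_sqrt).continuousOn) fun x hx => ?_
      have := Real.sqrt_pos.mpr hx.1
      positivity
    · rw [ae_restrict_iff' measurableSet_Ioc]
      refine ae_of_all _ fun x hx => ?_
      have hx0 : (0:ℝ) < x := hx.1
      have hsx : (0:ℝ) < Real.sqrt x := Real.sqrt_pos.mpr hx0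
      have h1 : x ^ (-(1/2) : ℝ) = 1/Real.sqrt x := by
        rw [Real.rpow_neg hx0.le, ← Real.sqrt_eq_rpow, one_div]
      rw [Real.norm_eq_abs, abs_mul, abs_of_pos (by positivity : (0:ℝ) < 1/(2*Real.sqrt x)), h1]
      calc 1/(2*Real.sqrt x) * |v x| = |v x| / (2*Real.sqrt x) := by ring
        _ ≤ M / (2*Real.sqrt x) := by gcongr; exact hvM x hx
        _ = M/2 * (1/Real.sqrt x) := by ring
  have hφ2 : IntegrableOn (fun x => Real.sqrt x * f x) (Ioc (0:ℝ) 1) := by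
    refine Integrable.mono' ((hrint (1-α) (by linarith)).const_mul C)
      (Real.continuous_sqrt.measurable.mul hfmeas).aestronglyMeasurable ?_
    rw [ae_restrict_iff' measurableSet_Ioc]
    refine ae_of_all _ fun x hx => ?_
    have hx0 : (0:ℝ) < x := hx.1
    rw [Real.norm_eq_abs, abs_mul, abs_of_nonneg (Real.sqrt_nonneg x)]
    calc Real.sqrt x * |f x| ≤ Real.sqrt x * (C * x ^ ((1:ℝ)/2 - α)) := by
          exact mul_le_mul_of_nonneg_left (hfb x hx) (Real.sqrt_nonneg x)
      _ = C * x ^ ((1:ℝ) - α) := by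
          rw [Real.sqrt_eq_rpow, ← mul_assoc, mul_comm _ C, mul_assoc, ← Real.rpow_add hx0]
          congr 1
          congr 1
          ring
  have hφ_int : IntegrableOn φ (Ioc (0:ℝ) 1) := by
    rw [hφdef]; exact hφ1.add hφ2
  refine ⟨?_, hφ_int.congr hφae.symm, ?_⟩
  · -- FTC for sqrt * v
    intro y hy
    have hy0 : (0:ℝ) < y := hy.1
    have hy1 : y ≤ 1 := hy.2
    have hsub : Ioc y 1 ⊆ Ioc (0:ℝ) 1 := Ioc_subset_Ioc_left hy0.le
    have i_f : IntegrableOn f (Ioc y 1) := hf_int.mono_set hsub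
    have i1 : IntegrableOn (fun x => 1/(2*Real.sqrt x) * v x) (Ioc y 1) := hφ1.mono_set hsub
    have i2 : IntegrableOn (fun t => Real.sqrt t * f t) (Ioc y 1) := hφ2.mono_set hsub
    have e3 : (fun t => (Real.sqrt t - Real.sqrt y) * f t)
        = fun t => Real.sqrt t * f t - Real.sqrt y * f t := funext fun t => by ring
    have i3 : IntegrableOn (fun t => (Real.sqrt t - Real.sqrt y) * f t) (Ioc y 1) := by
      rw [e3]; exact i2.sub (i_f.const_mul _)
    -- Fubini claim
    have T1 : (∫ x in Ioc y 1, 1/(2*Real.sqrt x) * v x)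
        = -∫ t in Ioc y 1, (Real.sqrt t - Real.sqrt y) * f t := by
      set S : Set (ℝ×ℝ) := {p : ℝ×ℝ | y < p.1 ∧ p.1 < p.2 ∧ p.2 ≤ 1} with hSdef
      have hSm : MeasurableSet S := by
        have hS : S = {p : ℝ×ℝ | y < p.1} ∩ ({p : ℝ×ℝ | p.1 < p.2} ∩ {p : ℝ×ℝ | p.2 ≤ 1}) := rfl
        rw [hS]
        exact (measurableSet_lt measurable_const measurable_fst).inter
          ((measurableSet_lt measurable_fst measurable_snd).inter
            (measurableSet_le measurable_snd measurable_const))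
      set K : ℝ×ℝ → ℝ := S.indicator (fun p => 1/(2*Real.sqrt p.1) * f p.2) with hKdef
      have hKm : Measurable K := by
        refine Measurable.indicator ?_ hSm
        exact (measurable_const.div
          ((Real.continuous_sqrt.measurable.comp measurable_fst).const_mul 2)).mul
          (hfmeas.comp measurable_snd)
      have hKi : Integrable K (volume.prod volume) := by
        have hB1 : Integrable ((Ioc y 1).indicator (fun _ : ℝ => 1/(2*Real.sqrt y))) volume :=
          (integrable_indicator_iff measurableSet_Ioc).mpr
            (integrableOn_const measure_Ioc_lt_top.ne)
        have hB2 : Integrable ((Ioc y 1).indicator (fun t => |f t|)) volume :=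
          (integrable_indicator_iff measurableSet_Ioc).mpr i_f.abs
        refine Integrable.mono' (hB1.mul_prod hB2) hKm.aestronglyMeasurable
          (ae_of_all _ fun p => ?_)
        rw [Real.norm_eq_abs, hKdef]
        by_cases hp : p ∈ S
        · rw [indicator_of_mem hp]
          obtain ⟨h1, h2, h3⟩ := hp
          have hp1 : p.1 ∈ Ioc y 1 := ⟨h1, le_trans h2.le h3⟩
          have hp2 : p.2 ∈ Ioc y 1 := ⟨lt_trans h1 h2, h3⟩
          simp only [indicator_of_mem hp1, indicator_of_mem hp2]
          rw [abs_mul]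
          have hsp : (0:ℝ) < Real.sqrt p.1 := Real.sqrt_pos.mpr (lt_trans hy0 h1)
          have hsy : (0:ℝ) < Real.sqrt y := Real.sqrt_pos.mpr hy0
          rw [abs_of_pos (by positivity : (0:ℝ) < 1/(2*Real.sqrt p.1))]
          refine mul_le_mul_of_nonneg_right ?_ (abs_nonneg _)
          refine one_div_le_one_div_of_le (by positivity) ?_
          have := Real.sqrt_le_sqrt h1.le
          linarith
        · rw [indicator_of_notMem hp, abs_zero]
          exact mul_nonneg (indicator_nonneg (fun a _ => by positivity) _)
            (indicator_nonneg (fun a _ => abs_nonneg _) _)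
      have hsqrtint : ∀ t ∈ Ioc y 1,
          (∫ x in Ioo y t, 1/(2*Real.sqrt x)) = Real.sqrt t - Real.sqrt y := by
        intro t ht
        rw [← integral_Ioc_eq_integral_Ioo, ← intervalIntegral.integral_of_le ht.1.le]
        refine intervalIntegral.integral_eq_sub_of_hasDerivAt (fun x hx => ?_) ?_
        · rw [uIcc_of_le ht.1.le] at hx
          exact Real.hasDerivAt_sqrt (ne_of_gt (lt_of_lt_of_le hy0 hx.1))
        · refine ContinuousOn.intervalIntegrable ?_
          refine ContinuousOn.div continuousOn_const
            ((continuous_const.mul Real.continuous_sqrt).continuousOn) fun x hx => ?_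
          rw [uIcc_of_le ht.1.le] at hx
          have : (0:ℝ) < Real.sqrt x := Real.sqrt_pos.mpr (lt_of_lt_of_le hy0 hx.1)
          positivity
      have hL : ∀ x : ℝ, (∫ t, K (x, t))
          = (Ioc y 1).indicator (fun x' => 1/(2*Real.sqrt x') * (-v x')) x := by
        intro x
        by_cases hx : x ∈ Ioc y 1
        · rw [indicator_of_mem hx]
          have hxv : v x = -∫ t in Ioc x 1, f t := hvy x ⟨lt_trans hy0 hx.1, hx.2⟩
          have hfun : (fun t => K (x, t)) = (Ioc x 1).indicator
              (fun t => 1/(2*Real.sqrt x) * f t) := by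
            funext t
            by_cases ht : t ∈ Ioc x 1
            · rw [indicator_of_mem ht, hKdef,
                indicator_of_mem (show (x,t) ∈ S from ⟨hx.1, ht.1, ht.2⟩)]
            · rw [indicator_of_notMem ht, hKdef,
                indicator_of_notMem (fun hmem => ht ⟨hmem.2.1, hmem.2.2⟩)]
          rw [hfun, integral_indicator measurableSet_Ioc, integral_const_mul,
            show (∫ t in Ioc x 1, f t) = -v x from by rw [hxv]; ring]
        · rw [indicator_of_notMem hx]
          have hfun : (fun t => K (x, t)) = fun _ => (0:ℝ) := by
            funext t
            rw [hKdef, indicator_of_notMem]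
            intro hmem
            exact hx ⟨hmem.1, le_trans hmem.2.1.le hmem.2.2⟩
          rw [hfun]; simp
      have hR : ∀ t : ℝ, (∫ x, K (x, t))
          = (Ioc y 1).indicator (fun t' => (Real.sqrt t' - Real.sqrt y) * f t') t := by
        intro t
        by_cases ht : t ∈ Ioc y 1
        · rw [indicator_of_mem ht]
          have hfun : (fun x => K (x, t)) = (Ioo y t).indicator
              (fun x => 1/(2*Real.sqrt x) * f t) := by
            funext x
            by_cases hx : x ∈ Ioo y t
            · rw [indicator_of_mem hx, hKdef,
                indicator_of_mem (show (x,t) ∈ S from ⟨hx.1, hx.2, ht.2⟩)]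
            · rw [indicator_of_notMem hx, hKdef,
                indicator_of_notMem (fun hmem => hx ⟨hmem.1, hmem.2.1⟩)]
          rw [hfun, integral_indicator measurableSet_Ioo, integral_mul_const, hsqrtint t ht]
        · rw [indicator_of_notMem ht]
          have hfun : (fun x => K (x, t)) = fun _ => (0:ℝ) := by
            funext x
            rw [hKdef, indicator_of_notMem]
            intro hmem
            exact ht ⟨lt_trans hmem.1 hmem.2.1, hmem.2.2⟩
          rw [hfun]; simp
      have hswap := integral_integral_swap (f := fun x t => K (x, t)) hKi
      have hLHS : (∫ x : ℝ, ∫ t : ℝ, K (x, t))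
          = -∫ x in Ioc y 1, 1/(2*Real.sqrt x) * v x := by
        calc (∫ x : ℝ, ∫ t : ℝ, K (x, t))
            = ∫ x : ℝ, (Ioc y 1).indicator (fun x' => 1/(2*Real.sqrt x') * (-v x')) x :=
              integral_congr_ae (ae_of_all _ hL)
          _ = ∫ x in Ioc y 1, 1/(2*Real.sqrt x) * (-v x) := integral_indicator measurableSet_Ioc
          _ = -∫ x in Ioc y 1, 1/(2*Real.sqrt x) * v x := by
              rw [← integral_neg]
              exact integral_congr_ae (ae_of_all _ fun x => by ring)
      have hRHS : (∫ t : ℝ, ∫ x : ℝ, K (x, t))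
          = ∫ t in Ioc y 1, (Real.sqrt t - Real.sqrt y) * f t := by
        calc (∫ t : ℝ, ∫ x : ℝ, K (x, t))
            = ∫ t : ℝ, (Ioc y 1).indicator (fun t' => (Real.sqrt t' - Real.sqrt y) * f t') t :=
              integral_congr_ae (ae_of_all _ hR)
          _ = _ := integral_indicator measurableSet_Ioc
      rw [hLHS, hRHS] at hswap
      linarith
    have hfI : (∫ t in Ioc y 1, f t) = -v y := by rw [hvy y hy]; ring
    have C1 : (∫ x in Ioc y 1, φ x) = -(Real.sqrt y * v y) := by
      have hsplit : (∫ x in Ioc y 1, φ x)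
          = (∫ x in Ioc y 1, 1/(2*Real.sqrt x) * v x)
            + ∫ t in Ioc y 1, Real.sqrt t * f t := by
        rw [hφdef]; exact integral_add i1 i2
      have e4 : (∫ t in Ioc y 1, Real.sqrt t * f t)
          - ∫ t in Ioc y 1, (Real.sqrt t - Real.sqrt y) * f t
          = ∫ t in Ioc y 1, Real.sqrt y * f t := by
        rw [← integral_sub i2 i3]
        exact integral_congr_ae (ae_of_all _ fun t => by ring)
      have e5 : (∫ t in Ioc y 1, Real.sqrt y * f t) = Real.sqrt y * (-v y) := by
        rw [integral_const_mul, hfI]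
      rw [hsplit, T1]
      linarith
    rw [intervalIntegral.integral_of_le hy1,
      integral_congr_ae (ae_restrict_of_ae_restrict_of_subset hsub hφae), C1, hv1,
      Real.sqrt_one]
    ring
  · -- limit at 0+
    have hmem : Ioc (0:ℝ) 1 ∈ nhdsWithin (0:ℝ) (Ioi 0) :=
      Ioc_mem_nhdsGT_of_mem ⟨le_refl 0, one_pos⟩
    refine squeeze_zero_norm' (a := fun x => Real.sqrt x * M) ?_ ?_
    · filter_upwards [hmem] with x hx
      rw [Real.norm_eq_abs, abs_mul, abs_of_nonneg (Real.sqrt_nonneg x)]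
      exact mul_le_mul_of_nonneg_left (hvM x hx) (Real.sqrt_nonneg x)
    · have h0 : Tendsto (fun x : ℝ => Real.sqrt x) (nhdsWithin 0 (Ioi 0)) (nhds 0) := by
        have h := Real.continuous_sqrt.tendsto 0
        rw [Real.sqrt_zero] at h
        exact h.mono_left nhdsWithin_le_nhds
      simpa using h0.mul_const M
end
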